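/- (Transitivity) Let M be a Wall form such that the complex L(M) is connected, i.e., any two morphisms W → M can be joined by a finite sequence of morphisms W → M in which consecutive morphisms have orthogonal images. Then for any two morphisms f₁, f₂ : W → M there exists a Wall form automorphism Φ : M → M such that f₁ = Φ ∘ f₂. -/

import Mathlib

/-!
Framework: `H`-pairs and Wall forms, following N. Perlmutter,
"Homological stability for the moduli spaces of products of spheres".

A form parameter `(G, ∂, π, ε)` is recorded together with the two
compatibility identities `∂(ε•h) = ∂(h)` and `π(∂(h)) = h + ε•h`, which hold
in the geometric situation considered in the paper and which are exactly the
conditions needed for the standard Wall forms `W^g` to exist.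
-/

section HPairs

/-- An `H`-pair: a pair of abelian groups together with a ℤ-bilinear
(i.e. biadditive) map `τ : M₋ × H → M₊`. -/
structure HPair (H : Type) [AddCommGroup H] where
  Neg : Type
  Pos : Type
  [negGrp : AddCommGroup Neg]
  [posGrp : AddCommGroup Pos]
  tau : Neg →+ H →+ Pos

attribute [instance] HPair.negGrp HPair.posGrp

variable {H : Type} [AddCommGroup H]

/-- An `H`-map of `H`-pairs. -/
structure HPairHom (M N : HPair H) where
  neg : M.Neg →+ N.Neg
  pos : M.Pos →+ N.Pos
  comm : ∀ x h, pos (M.tau x h) = N.tau (neg x) h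

/-- An isomorphism of `H`-pairs. -/
structure HPairIso (M N : HPair H) where
  toHom : HPairHom M N
  invHom : HPairHom N M
  left_neg : ∀ x, invHom.neg (toHom.neg x) = x
  right_neg : ∀ x, toHom.neg (invHom.neg x) = x
  left_pos : ∀ y, invHom.pos (toHom.pos y) = y
  right_pos : ∀ y, toHom.pos (invHom.pos y) = y

/-- An `H`-pair is finitely generated if both component groups are. -/
def HPair.FG (M : HPair H) : Prop :=
  AddGroup.FG M.Neg ∧ AddGroup.FG M.Pos

/-- The componentwise direct sum of two `H`-pairs. -/
@[reducible] def HPair.sum (M N : HPair H) : HPair H where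
  Neg := M.Neg × N.Neg
  Pos := M.Pos × N.Pos
  tau :=
    { toFun := fun x => (M.tau x.1).prod (N.tau x.2)
      map_zero' := by
        refine AddMonoidHom.ext fun h => ?_
        simp [Prod.ext_iff]
      map_add' := by
        intro x y
        refine AddMonoidHom.ext fun h => ?_
        simp [Prod.ext_iff] }

/-- The left inclusion `M → M ⊕ N`. -/
def HPairHom.inl (M N : HPair H) : HPairHom M (M.sum N) where
  neg := AddMonoidHom.inl M.Neg N.Neg
  pos := AddMonoidHom.inl M.Pos N.Pos
  comm := by
    intro x h
    simp [HPair.sum, Prod.ext_iff]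

/-- The right inclusion `N → M ⊕ N`. -/
def HPairHom.inr (M N : HPair H) : HPairHom N (M.sum N) where
  neg := AddMonoidHom.inr M.Neg N.Neg
  pos := AddMonoidHom.inr M.Pos N.Pos
  comm := by
    intro x h
    simp [HPair.sum, Prod.ext_iff]

/-- The `H`-pair `P⁰`, with `P⁰₋ = 0`, `P⁰₊ = ℤ` and `τ = 0`. -/
def P0 (H : Type) [AddCommGroup H] : HPair H where
  Neg := PUnit
  Pos := ℤ
  tau := 0

/-- The `H`-pair `P¹`, with `P¹₋ = ℤ`, `P¹₊ = H` and `τ(t, h) = t • h`. -/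
def P1 (H : Type) [AddCommGroup H] : HPair H where
  Neg := ℤ
  Pos := H
  tau := zmultiplesHom (H →+ H) (AddMonoidHom.id H)

/-- The generating-set length `d(H)`: the minimal `k` such that there is a
surjection `ℤ^k → H`. -/
noncomputable def dlen (H : Type) [AddCommGroup H] : ℕ :=
  sInf { k : ℕ | ∃ φ : (Fin k → ℤ) →+ H, Function.Surjective φ }

end HPairs

section WallForms

variable {H : Type} [AddCommGroup H]

/-- A form parameter `(G, ∂, π, ε)` for the category of `H`-pairs.  The two
compatibility identities `bd_eps` and `pi_bd` hold in the geometric setting of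
the paper and are needed for the standard Wall forms to exist. -/
structure FormParameter (H : Type) [AddCommGroup H] where
  G : HPair H
  bd : H →+ G.Pos
  pi : G.Pos →+ H
  eps : ℤ
  eps_pm : eps = 1 ∨ eps = -1
  bd_eps : ∀ h : H, bd (eps • h) = bd h
  pi_bd : ∀ h : H, pi (bd h) = h + eps • h

variable {P : FormParameter H}

/-- A Wall form structure (with parameter `P`) on the `H`-pair `C`. -/
structure WallAux (P : FormParameter H) (C : HPair H) where
  lam : C.Neg →+ C.Pos →+ ℤ
  mu : C.Pos →+ C.Pos →+ H
  alphaNeg : C.Neg →+ P.G.Neg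
  alphaPos : C.Pos → P.G.Pos
  mu_symm : ∀ y y', mu y y' = P.eps • mu y' y
  lam_tau : ∀ x x' h, lam x (C.tau x' h) = 0
  mu_tau : ∀ x h y, mu (C.tau x h) y = lam x y • h
  alphaPos_add : ∀ y y', alphaPos (y + y') = alphaPos y + alphaPos y' + P.bd (mu y y')
  mu_diag : ∀ y, mu y y = P.pi (alphaPos y)
  alphaPos_tau : ∀ x h, alphaPos (C.tau x h) = P.G.tau (alphaNeg x) h

/-- A Wall form with parameter `P`: a finitely generated `H`-pair together
with a Wall form structure. -/
structure WallForm (P : FormParameter H) where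
  carrier : HPair H
  fgNeg : AddGroup.FG carrier.Neg
  fgPos : AddGroup.FG carrier.Pos
  str : WallAux P carrier

/-- The property of an `H`-map to preserve all values of `λ`, `μ`, `α₋`, `α₊`. -/
def IsWallHom {C D : HPair H} (S : WallAux P C) (T : WallAux P D)
    (f : HPairHom C D) : Prop :=
  (∀ x y, T.lam (f.neg x) (f.pos y) = S.lam x y) ∧
  (∀ y y', T.mu (f.pos y) (f.pos y') = S.mu y y') ∧
  (∀ x, T.alphaNeg (f.neg x) = S.alphaNeg x) ∧
  (∀ y, T.alphaPos (f.pos y) = S.alphaPos y)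

/-- A morphism of Wall forms. -/
structure WallHom (M N : WallForm P) where
  hom : HPairHom M.carrier N.carrier
  isWall : IsWallHom M.str N.str hom

/-- An isomorphism of Wall forms: a morphism with a two-sided inverse morphism. -/
structure WallIso (M N : WallForm P) where
  toHom : WallHom M N
  invHom : WallHom N M
  left_neg : ∀ x, invHom.hom.neg (toHom.hom.neg x) = x
  right_neg : ∀ x, toHom.hom.neg (invHom.hom.neg x) = x
  left_pos : ∀ y, invHom.hom.pos (toHom.hom.pos y) = y
  right_pos : ∀ y, toHom.hom.pos (invHom.hom.pos y) = y

end WallForms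
section Extra

variable {H : Type} [AddCommGroup H] {P : FormParameter H}

/-- A subgroup of a finitely generated abelian group is finitely generated. -/
theorem addGroup_fg_subgroup {A : Type} [AddCommGroup A] (hA : AddGroup.FG A)
    (S : AddSubgroup A) : AddGroup.FG S := by
  haveI : Module.Finite ℤ A := Module.Finite.iff_addGroup_fg.mpr hA
  haveI : IsNoetherian ℤ A := isNoetherian_of_isNoetherianRing_of_finite ℤ A
  have h : (AddSubgroup.toIntSubmodule S).FG := IsNoetherian.noetherian _
  have h2 : Module.Finite ℤ (AddSubgroup.toIntSubmodule S) := Module.Finite.iff_fg.mpr h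
  exact Module.Finite.iff_addGroup_fg.mp h2

theorem addGroup_fg_of_module_finite {A : Type} [AddCommGroup A]
    [Module.Finite ℤ A] : AddGroup.FG A :=
  Module.Finite.iff_addGroup_fg.mp inferInstance

end Extra

section StdWall

variable {H : Type} [AddCommGroup H]

/-- The underlying `H`-pair of the standard Wall form of rank `g`:
`W^g₋ = ℤ^g` and `W^g₊ = ℤ^g × H^g`  (the first factor records the
`b`-coordinates, the second the `τ(a_i, -)`-coordinates). -/
@[reducible] def stdPair (H : Type) [AddCommGroup H] (g : ℕ) : HPair H where
  Neg := Fin g → ℤ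
  Pos := (Fin g → ℤ) × (Fin g → H)
  tau :=
    { toFun := fun x =>
        { toFun := fun h => (0, fun i => x i • h)
          map_zero' := by
            refine Prod.ext rfl ?_
            funext i
            simp
          map_add' := by
            intro h h'
            refine Prod.ext (by simp) ?_
            funext i
            simp [smul_add] }
      map_zero' := by
        refine AddMonoidHom.ext fun h => ?_
        refine Prod.ext rfl ?_
        funext i
        simp
      map_add' := by
        intro x x'
        refine AddMonoidHom.ext fun h => ?_
        refine Prod.ext (by simp) ?_
        funext i
        simp [add_smul] }

variable (P : FormParameter H)

/-- The standard Wall form `W^g` of rank `g` with parameter `P`. -/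
def stdWall [AddGroup.FG H] (g : ℕ) : WallForm P where
  carrier := stdPair H g
  fgNeg := by
    have : Module.Finite ℤ (Fin g → ℤ) := inferInstance
    exact addGroup_fg_of_module_finite
  fgPos := by
    haveI : Module.Finite ℤ H := Module.Finite.iff_addGroup_fg.mpr ‹AddGroup.FG H›
    have : Module.Finite ℤ ((Fin g → ℤ) × (Fin g → H)) := inferInstance
    exact addGroup_fg_of_module_finite
  str :=
    { lam :=
        { toFun := fun x =>
            { toFun := fun w => ∑ i, x i * w.1 i
              map_zero' := by simp
              map_add' := by
                intro w w'
                simp [mul_add, Finset.sum_add_distrib] }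
          map_zero' := by
            refine AddMonoidHom.ext fun w => ?_
            show (∑ i, (0 : Fin g → ℤ) i * w.1 i) = 0
            simp
          map_add' := by
            intro x x'
            refine AddMonoidHom.ext fun w => ?_
            simp [add_mul, Finset.sum_add_distrib] }
      mu :=
        { toFun := fun w =>
            { toFun := fun w' => (∑ i, w'.1 i • w.2 i) + P.eps • ∑ i, w.1 i • w'.2 i
              map_zero' := by simp
              map_add' := by
                intro w' w''
                simp only [Prod.fst_add, Prod.snd_add, Pi.add_apply, add_smul, smul_add,
                  Finset.sum_add_distrib]
                abel }
          map_zero' := by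
            refine AddMonoidHom.ext fun w' => ?_
            simp
          map_add' := by
            intro w w'
            refine AddMonoidHom.ext fun w'' => ?_
            simp only [Prod.fst_add, Prod.snd_add, Pi.add_apply, add_smul, smul_add,
              Finset.sum_add_distrib, AddMonoidHom.coe_mk, ZeroHom.coe_mk,
              AddMonoidHom.add_apply]
            abel }
      alphaNeg := 0
      alphaPos := fun w => P.bd (∑ i, w.1 i • w.2 i)
      mu_symm := by
        intro y y'
        have he : P.eps * P.eps = 1 := by
          rcases P.eps_pm with h | h <;> simp [h]
        show (∑ i, y'.1 i • y.2 i) + P.eps • ∑ i, y.1 i • y'.2 i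
            = P.eps • ((∑ i, y.1 i • y'.2 i) + P.eps • ∑ i, y'.1 i • y.2 i)
        rw [smul_add, smul_smul, he, one_smul, add_comm]
      lam_tau := by
        intro x x' h
        show (∑ i, x i * (0 : Fin _ → ℤ) i) = 0
        simp
      mu_tau := by
        intro x h y
        show (∑ i, y.1 i • (fun i => x i • h) i) + P.eps • ∑ i, (0 : Fin _ → ℤ) i • y.2 i
            = (∑ i, x i * y.1 i) • h
        simp only [Pi.zero_apply, zero_smul, Finset.sum_const_zero, smul_zero, add_zero]
        rw [Finset.sum_smul]
        congr 1
        funext i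
        rw [smul_smul, mul_comm]
      alphaPos_add := by
        intro y y'
        show P.bd (∑ i, (y.1 i + y'.1 i) • (y.2 i + y'.2 i))
            = P.bd (∑ i, y.1 i • y.2 i) + P.bd (∑ i, y'.1 i • y'.2 i)
              + P.bd ((∑ i, y'.1 i • y.2 i) + P.eps • ∑ i, y.1 i • y'.2 i)
        have expand : ∀ i : Fin _, (y.1 i + y'.1 i) • (y.2 i + y'.2 i)
            = (y.1 i • y.2 i + y'.1 i • y'.2 i) + (y'.1 i • y.2 i + y.1 i • y'.2 i) := by
          intro i
          rw [add_smul, smul_add, smul_add]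
          abel
        rw [Finset.sum_congr rfl fun i _ => expand i, Finset.sum_add_distrib,
          Finset.sum_add_distrib, Finset.sum_add_distrib, map_add, map_add, map_add, map_add,
          P.bd_eps]
      mu_diag := by
        intro y
        show (∑ i, y.1 i • y.2 i) + P.eps • ∑ i, y.1 i • y.2 i
            = P.pi (P.bd (∑ i, y.1 i • y.2 i))
        rw [P.pi_bd]
      alphaPos_tau := by
        intro x h
        show P.bd (∑ i, (0 : Fin _ → ℤ) i • (fun i => x i • h) i) = P.G.tau ((0 : _ →+ _) x) h
        simp }

variable {P}

/-- The `i`-th standard generator `a_i ∈ W^g₋`. -/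
def stdA [AddGroup.FG H] {g : ℕ} (i : Fin g) : (stdWall P g).carrier.Neg :=
  Pi.single i 1

/-- The `i`-th standard generator `b_i ∈ W^g₊`. -/
def stdB [AddGroup.FG H] {g : ℕ} (i : Fin g) : (stdWall P g).carrier.Pos :=
  (Pi.single i 1, 0)

end StdWall
section SubPairs

variable {H : Type} [AddCommGroup H] {P : FormParameter H}

/-- A sub-`H`-pair of the `H`-pair `C`. -/
structure SubPair (C : HPair H) where
  neg : AddSubgroup C.Neg
  pos : AddSubgroup C.Pos
  tau_mem : ∀ x ∈ neg, ∀ h, C.tau x h ∈ pos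

/-- The componentwise intersection of two sub-`H`-pairs. -/
def SubPair.inf {C : HPair H} (N N' : SubPair C) : SubPair C where
  neg := N.neg ⊓ N'.neg
  pos := N.pos ⊓ N'.pos
  tau_mem := fun x hx h => ⟨N.tau_mem x hx.1 h, N'.tau_mem x hx.2 h⟩

/-- The image of an `H`-map, as a sub-`H`-pair of the codomain. -/
def HPairHom.rangeSub {C D : HPair H} (f : HPairHom C D) : SubPair D where
  neg := f.neg.range
  pos := f.pos.range
  tau_mem := by
    rintro x ⟨a, rfl⟩ h
    exact ⟨C.tau a h, f.comm a h⟩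

/-- The kernel of an `H`-map, as a sub-`H`-pair of the domain. -/
def HPairHom.kerSub {C D : HPair H} (f : HPairHom C D) : SubPair C where
  neg := f.neg.ker
  pos := f.pos.ker
  tau_mem := by
    intro x hx h
    have hx' : f.neg x = 0 := hx
    have h2 : f.pos (C.tau x h) = D.tau (f.neg x) h := f.comm x h
    rw [hx'] at h2
    have h3 : f.pos (C.tau x h) = 0 := by
      rw [h2, map_zero, AddMonoidHom.zero_apply]
    exact h3

/-- The orthogonal complement of a sub-`H`-pair, with respect to a Wall form
structure `S` on the ambient `H`-pair. -/
def SubPair.perp {C : HPair H} (S : WallAux P C) (N : SubPair C) : SubPair C where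
  neg :=
    { carrier := { x | ∀ w ∈ N.pos, S.lam x w = 0 }
      add_mem' := by
        intro a b ha hb w hw
        rw [map_add, AddMonoidHom.add_apply, ha w hw, hb w hw, add_zero]
      zero_mem' := by
        intro w hw
        rw [map_zero, AddMonoidHom.zero_apply]
      neg_mem' := by
        intro a ha w hw
        rw [map_neg, AddMonoidHom.neg_apply, ha w hw, neg_zero] }
  pos :=
    { carrier := { y | (∀ v ∈ N.neg, S.lam v y = 0) ∧ ∀ w ∈ N.pos, S.mu y w = 0 }
      add_mem' := by
        intro a b ha hb
        refine ⟨fun v hv => ?_, fun w hw => ?_⟩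
        · rw [map_add, ha.1 v hv, hb.1 v hv, add_zero]
        · rw [map_add, AddMonoidHom.add_apply, ha.2 w hw, hb.2 w hw, add_zero]
      zero_mem' := by
        refine ⟨fun v hv => ?_, fun w hw => ?_⟩
        · rw [map_zero]
        · rw [map_zero, AddMonoidHom.zero_apply]
      neg_mem' := by
        intro a ha
        refine ⟨fun v hv => ?_, fun w hw => ?_⟩
        · rw [map_neg, ha.1 v hv, neg_zero]
        · rw [map_neg, AddMonoidHom.neg_apply, ha.2 w hw, neg_zero] }
  tau_mem := by
    intro x hx h
    refine ⟨fun v hv => S.lam_tau v x h, fun w hw => ?_⟩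
    rw [S.mu_tau x h w, hx w hw, zero_smul]

/-- Orthogonality of two sub-`H`-pairs with respect to a Wall form structure
`S`: trivial intersection and mutual containment in orthogonal complements. -/
def OrthogonalIn {C : HPair H} (S : WallAux P C) (N N' : SubPair C) : Prop :=
  N.neg ⊓ N'.neg = ⊥ ∧ N.pos ⊓ N'.pos = ⊥ ∧
  N.neg ≤ (N'.perp S).neg ∧ N.pos ≤ (N'.perp S).pos ∧
  N'.neg ≤ (N.perp S).neg ∧ N'.pos ≤ (N.perp S).pos

/-- The underlying `H`-pair of a sub-`H`-pair. -/
@[reducible] def SubPair.toPair {C : HPair H} (N : SubPair C) : HPair H where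
  Neg := N.neg
  Pos := N.pos
  tau :=
    { toFun := fun x =>
        { toFun := fun h => ⟨C.tau x h, N.tau_mem x x.2 h⟩
          map_zero' := by
            apply Subtype.ext
            simp
          map_add' := by
            intro h h'
            apply Subtype.ext
            simp }
      map_zero' := by
        refine AddMonoidHom.ext fun h => ?_
        apply Subtype.ext
        simp
      map_add' := by
        intro x x'
        refine AddMonoidHom.ext fun h => ?_
        apply Subtype.ext
        simp }

/-- The restriction of a Wall form structure to a sub-`H`-pair. -/
def SubPair.restrict {C : HPair H} (S : WallAux P C) (N : SubPair C) :
    WallAux P N.toPair where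
  lam :=
    { toFun := fun x => (S.lam (x : C.Neg)).comp N.pos.subtype
      map_zero' := by
        refine AddMonoidHom.ext fun y => ?_
        simp
      map_add' := by
        intro x x'
        refine AddMonoidHom.ext fun y => ?_
        simp }
  mu :=
    { toFun := fun y => (S.mu (y : C.Pos)).comp N.pos.subtype
      map_zero' := by
        refine AddMonoidHom.ext fun y => ?_
        simp
      map_add' := by
        intro y y'
        refine AddMonoidHom.ext fun y'' => ?_
        simp }
  alphaNeg := S.alphaNeg.comp N.neg.subtype
  alphaPos := fun y => S.alphaPos (y : C.Pos)
  mu_symm := fun y y' => S.mu_symm (y : C.Pos) y'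
  lam_tau := fun x x' h => S.lam_tau (x : C.Neg) x' h
  mu_tau := fun x h y => S.mu_tau (x : C.Neg) h y
  alphaPos_add := fun y y' => S.alphaPos_add (y : C.Pos) y'
  mu_diag := fun y => S.mu_diag (y : C.Pos)
  alphaPos_tau := fun x h => S.alphaPos_tau (x : C.Neg) h

/-- A sub-`H`-pair of (the carrier of) a Wall form is itself a Wall form, via
the restricted structure maps. -/
def SubPair.toWall {M : WallForm P} (N : SubPair M.carrier) : WallForm P where
  carrier := N.toPair
  fgNeg := addGroup_fg_subgroup M.fgNeg N.neg
  fgPos := addGroup_fg_subgroup M.fgPos N.pos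
  str := N.restrict M.str

end SubPairs
section SumAndRank

variable {H : Type} [AddCommGroup H] {P : FormParameter H}

/-- The orthogonal direct sum of two Wall forms. -/
def WallForm.sum (M N : WallForm P) : WallForm P where
  carrier := M.carrier.sum N.carrier
  fgNeg := by
    haveI : Module.Finite ℤ M.carrier.Neg := Module.Finite.iff_addGroup_fg.mpr M.fgNeg
    haveI : Module.Finite ℤ N.carrier.Neg := Module.Finite.iff_addGroup_fg.mpr N.fgNeg
    have : Module.Finite ℤ (M.carrier.Neg × N.carrier.Neg) := inferInstance
    exact Module.Finite.iff_addGroup_fg.mp this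
  fgPos := by
    haveI : Module.Finite ℤ M.carrier.Pos := Module.Finite.iff_addGroup_fg.mpr M.fgPos
    haveI : Module.Finite ℤ N.carrier.Pos := Module.Finite.iff_addGroup_fg.mpr N.fgPos
    have : Module.Finite ℤ (M.carrier.Pos × N.carrier.Pos) := inferInstance
    exact Module.Finite.iff_addGroup_fg.mp this
  str :=
    { lam :=
        { toFun := fun x => (M.str.lam x.1).coprod (N.str.lam x.2)
          map_zero' := by
            refine AddMonoidHom.ext fun y => ?_
            simp
          map_add' := by
            intro x x'
            refine AddMonoidHom.ext fun y => ?_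
            simp
            abel }
      mu :=
        { toFun := fun y => (M.str.mu y.1).coprod (N.str.mu y.2)
          map_zero' := by
            refine AddMonoidHom.ext fun y' => ?_
            simp
          map_add' := by
            intro y y'
            refine AddMonoidHom.ext fun y'' => ?_
            simp
            abel }
      alphaNeg := (M.str.alphaNeg).coprod (N.str.alphaNeg)
      alphaPos := fun y => M.str.alphaPos y.1 + N.str.alphaPos y.2
      mu_symm := by
        intro y y'
        show M.str.mu y.1 y'.1 + N.str.mu y.2 y'.2
            = P.eps • (M.str.mu y'.1 y.1 + N.str.mu y'.2 y.2)
        rw [smul_add, M.str.mu_symm y.1 y'.1, N.str.mu_symm y.2 y'.2]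
      lam_tau := by
        intro x x' h
        show M.str.lam x.1 (M.carrier.tau x'.1 h) + N.str.lam x.2 (N.carrier.tau x'.2 h) = 0
        rw [M.str.lam_tau, N.str.lam_tau, add_zero]
      mu_tau := by
        intro x h y
        show M.str.mu (M.carrier.tau x.1 h) y.1 + N.str.mu (N.carrier.tau x.2 h) y.2
            = (M.str.lam x.1 y.1 + N.str.lam x.2 y.2) • h
        rw [M.str.mu_tau, N.str.mu_tau, add_smul]
      alphaPos_add := by
        intro y y'
        show M.str.alphaPos (y.1 + y'.1) + N.str.alphaPos (y.2 + y'.2)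
            = (M.str.alphaPos y.1 + N.str.alphaPos y.2)
              + (M.str.alphaPos y'.1 + N.str.alphaPos y'.2)
              + P.bd (M.str.mu y.1 y'.1 + N.str.mu y.2 y'.2)
        rw [M.str.alphaPos_add, N.str.alphaPos_add, map_add]
        abel
      mu_diag := by
        intro y
        show M.str.mu y.1 y.1 + N.str.mu y.2 y.2
            = P.pi (M.str.alphaPos y.1 + N.str.alphaPos y.2)
        rw [map_add, M.str.mu_diag, N.str.mu_diag]
      alphaPos_tau := by
        intro x h
        show M.str.alphaPos (M.carrier.tau x.1 h) + N.str.alphaPos (N.carrier.tau x.2 h)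
            = P.G.tau (M.str.alphaNeg x.1 + N.str.alphaNeg x.2) h
        rw [M.str.alphaPos_tau, N.str.alphaPos_tau, map_add, AddMonoidHom.add_apply] }

variable [AddGroup.FG H]

/-- `rankGE M g` expresses the inequality `r(M) ≥ g` for the rank of a Wall
form: there exists a morphism of Wall forms `W^g → M`. -/
def rankGE (M : WallForm P) (g : ℕ) : Prop :=
  Nonempty (WallHom (stdWall P g) M)

/-- `srankGE M g` expresses the inequality `r̄(M) ≥ g` for the stable rank of
a Wall form: `r(M ⊕ W^j) ≥ g + j` for some `j`. -/
def srankGE (M : WallForm P) (g : ℕ) : Prop :=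
  ∃ j : ℕ, rankGE (M.sum (stdWall P j)) (g + j)

end SumAndRank

section Duality

variable {H : Type} [AddCommGroup H] {P : FormParameter H}

/-- The duality map `T⁰ : M₋ → Hom(M, P⁰)` of a Wall form. -/
def dualT0 (M : WallForm P) (v : M.carrier.Neg) : HPairHom M.carrier (P0 H) where
  neg := 0
  pos := M.str.lam v
  comm := by
    intro x h
    show M.str.lam v (M.carrier.tau x h) = ((P0 H).tau 0) h
    rw [M.str.lam_tau]
    show (0 : ℤ) = ((0 : _ →+ (H →+ ℤ)) 0) h
    rfl

/-- The duality map `T¹ : M₊ → Hom(M, P¹)` of a Wall form. -/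
def dualT1 (M : WallForm P) (w : M.carrier.Pos) : HPairHom M.carrier (P1 H) where
  neg := M.str.lam.flip w
  pos := M.str.mu.flip w
  comm := by
    intro x h
    show M.str.mu (M.carrier.tau x h) w = (P1 H).tau (M.str.lam x w) h
    rw [M.str.mu_tau]
    show M.str.lam x w • h = (M.str.lam x w • AddMonoidHom.id H) h
    simp

end Duality


/-!
Two morphisms `W → M` with orthogonal images are given by orthogonal hyperbolic pairs
`(a₁, b₁)` and `(a₂, b₂)` in `M`. The elements `e = a₁ - a₂` and `f = b₁ - b₂` satisfy
`λ(e, f) = 2`, `μ(f, f) = 0`, `α₋(e) = 0` and `α₊(f) = 0`, and for any such pair the reflection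
`x ↦ x - λ(x, f) e`, `y ↦ y - λ(e, y) f - τ(e, μ(y, f))` is an involutive automorphism of `M`;
here it exchanges the two hyperbolic pairs. A morphism out of `W` is determined by the images of
the generators `a` and `b`, so the two morphisms differ by this reflection. Composing reflections
along a path in `L(M)` gives the theorem.
-/

namespace WallAux

variable {H : Type} [AddCommGroup H] {P : FormParameter H} {C : HPair H} (S : WallAux P C)

theorem mu_tau_right (y : C.Pos) (x : C.Neg) (h : H) :
    S.mu y (C.tau x h) = P.eps • (S.lam x y • h) := by
  rw [S.mu_symm, S.mu_tau]

theorem alphaPos_zero : S.alphaPos 0 = 0 := by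
  simpa using S.alphaPos_add 0 0

theorem alphaPos_neg_of_mu_self {z : C.Pos} (hz : S.mu z z = 0) :
    S.alphaPos (-z) = -S.alphaPos z := by
  have h := S.alphaPos_add z (-z)
  rw [add_neg_cancel, alphaPos_zero, map_neg, hz, neg_zero, map_zero, add_zero] at h
  exact (neg_eq_of_add_eq_zero_right h.symm).symm

theorem alphaPos_zsmul_of_mu_self {z : C.Pos} (hz : S.mu z z = 0) (n : ℤ) :
    S.alphaPos (n • z) = n • S.alphaPos z := by
  induction n using Int.induction_on with
  | zero => simpa using S.alphaPos_zero
  | succ n ih =>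
    rw [add_smul, one_smul, S.alphaPos_add, ih, map_zsmul, AddMonoidHom.smul_apply, hz,
      smul_zero, map_zero, add_zero, add_smul, one_smul]
  | pred n ih =>
    rw [sub_smul, one_smul, sub_eq_add_neg, S.alphaPos_add, ih, alphaPos_neg_of_mu_self S hz,
      map_neg, map_zsmul, AddMonoidHom.smul_apply, hz, smul_zero, neg_zero, map_zero, add_zero,
      sub_smul, one_smul, sub_eq_add_neg]

structure IsHyperbolic (a : C.Neg) (b : C.Pos) : Prop where
  lam_eq_one : S.lam a b = 1
  mu_self : S.mu b b = 0
  alphaNeg_eq_zero : S.alphaNeg a = 0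
  alphaPos_eq_zero : S.alphaPos b = 0

structure IsOrthogonalPair (a₁ : C.Neg) (b₁ : C.Pos) (a₂ : C.Neg) (b₂ : C.Pos) : Prop where
  lam₁₂ : S.lam a₁ b₂ = 0
  lam₂₁ : S.lam a₂ b₁ = 0
  mu₁₂ : S.mu b₁ b₂ = 0

structure IsReflectionPair (e : C.Neg) (f : C.Pos) : Prop where
  lam_eq_two : S.lam e f = 2
  mu_self : S.mu f f = 0
  alphaNeg_eq_zero : S.alphaNeg e = 0
  alphaPos_eq_zero : S.alphaPos f = 0

theorem IsOrthogonalPair.mu₂₁ {S : WallAux P C} {a₁ a₂ : C.Neg} {b₁ b₂ : C.Pos}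
    (ho : S.IsOrthogonalPair a₁ b₁ a₂ b₂) : S.mu b₂ b₁ = 0 := by
  rw [S.mu_symm, ho.mu₁₂, smul_zero]

theorem IsHyperbolic.isReflectionPair_sub {S : WallAux P C} {a₁ a₂ : C.Neg} {b₁ b₂ : C.Pos}
    (h₁ : S.IsHyperbolic a₁ b₁) (h₂ : S.IsHyperbolic a₂ b₂)
    (ho : S.IsOrthogonalPair a₁ b₁ a₂ b₂) : S.IsReflectionPair (a₁ - a₂) (b₁ - b₂) := by
  refine ⟨?_, ?_, ?_, ?_⟩
  · simp only [map_sub, AddMonoidHom.sub_apply, h₁.lam_eq_one, h₂.lam_eq_one,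
      ho.lam₁₂, ho.lam₂₁]
    norm_num
  · simp only [map_sub, AddMonoidHom.sub_apply, h₁.mu_self, h₂.mu_self, ho.mu₁₂,
      ho.mu₂₁, sub_zero]
  · rw [map_sub, h₁.alphaNeg_eq_zero, h₂.alphaNeg_eq_zero, sub_zero]
  · rw [sub_eq_add_neg, S.alphaPos_add, S.alphaPos_neg_of_mu_self h₂.mu_self, map_neg,
      ho.mu₁₂, h₁.alphaPos_eq_zero, h₂.alphaPos_eq_zero]
    simp

variable (e : C.Neg) (f : C.Pos)

def reflNeg : C.Neg →+ C.Neg :=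
  AddMonoidHom.mk' (fun x => x - S.lam x f • e) fun x x' => by
    simp only [map_add, AddMonoidHom.add_apply]
    module

def reflPos : C.Pos →+ C.Pos :=
  AddMonoidHom.mk' (fun y => y - S.lam e y • f - C.tau e (S.mu y f)) fun y y' => by
    simp only [map_add, AddMonoidHom.add_apply]
    module

@[simp] theorem reflNeg_apply (x : C.Neg) : S.reflNeg e f x = x - S.lam x f • e := rfl

@[simp] theorem reflPos_apply (y : C.Pos) :
    S.reflPos e f y = y - S.lam e y • f - C.tau e (S.mu y f) := rfl

theorem reflPos_tau (x : C.Neg) (h : H) :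
    S.reflPos e f (C.tau x h) = C.tau (S.reflNeg e f x) h := by
  simp only [reflPos_apply, reflNeg_apply, S.lam_tau, S.mu_tau, zero_smul, sub_zero, map_sub,
    map_zsmul, AddMonoidHom.sub_apply, AddMonoidHom.smul_apply]

def reflection : HPairHom C C := ⟨S.reflNeg e f, S.reflPos e f, S.reflPos_tau e f⟩

namespace IsReflectionPair

variable {S e f}

theorem lam_reflNeg (hr : S.IsReflectionPair e f) (x : C.Neg) :
    S.lam (S.reflNeg e f x) f = -S.lam x f := by
  simp only [reflNeg_apply, map_sub, map_zsmul, AddMonoidHom.sub_apply, AddMonoidHom.smul_apply,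
    hr.lam_eq_two, smul_eq_mul]
  ring

theorem lam_reflPos (hr : S.IsReflectionPair e f) (y : C.Pos) :
    S.lam e (S.reflPos e f y) = -S.lam e y := by
  simp only [reflPos_apply, map_sub, map_zsmul, S.lam_tau, hr.lam_eq_two, smul_eq_mul]
  ring

theorem mu_reflPos (hr : S.IsReflectionPair e f) (y : C.Pos) :
    S.mu (S.reflPos e f y) f = -S.mu y f := by
  simp only [reflPos_apply, map_sub, map_zsmul, AddMonoidHom.sub_apply, AddMonoidHom.smul_apply,
    S.mu_tau, hr.lam_eq_two, hr.mu_self, smul_zero]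
  module

theorem reflNeg_involutive (hr : S.IsReflectionPair e f) :
    Function.Involutive (S.reflNeg e f) := fun x => by
  rw [reflNeg_apply _ _ _ (S.reflNeg e f x), hr.lam_reflNeg, reflNeg_apply]
  module

theorem reflPos_involutive (hr : S.IsReflectionPair e f) :
    Function.Involutive (S.reflPos e f) := fun y => by
  rw [reflPos_apply _ _ _ (S.reflPos e f y), hr.lam_reflPos, hr.mu_reflPos, reflPos_apply,
    map_neg]
  module

theorem lam_reflNeg_reflPos (hr : S.IsReflectionPair e f) (x : C.Neg) (y : C.Pos) :
    S.lam (S.reflNeg e f x) (S.reflPos e f y) = S.lam x y := by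
  rw [reflNeg_apply, map_sub, map_zsmul, AddMonoidHom.sub_apply, AddMonoidHom.smul_apply,
    hr.lam_reflPos]
  simp only [reflPos_apply, map_sub, map_zsmul, S.lam_tau, smul_eq_mul]
  ring

theorem mu_reflPos_reflPos (hr : S.IsReflectionPair e f) (y y' : C.Pos) :
    S.mu (S.reflPos e f y) (S.reflPos e f y') = S.mu y y' := by
  rw [reflPos_apply _ _ _ y, map_sub, map_sub, map_zsmul, AddMonoidHom.sub_apply,
    AddMonoidHom.sub_apply, AddMonoidHom.smul_apply, S.mu_tau, hr.lam_reflPos, S.mu_symm f,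
    hr.mu_reflPos]
  simp only [reflPos_apply, map_sub, map_zsmul, mu_tau_right]
  rw [S.mu_symm y' f]
  module

theorem alphaNeg_reflNeg (hr : S.IsReflectionPair e f) (x : C.Neg) :
    S.alphaNeg (S.reflNeg e f x) = S.alphaNeg x := by
  rw [reflNeg_apply, map_sub, map_zsmul, hr.alphaNeg_eq_zero, smul_zero, sub_zero]

theorem alphaPos_reflPos (hr : S.IsReflectionPair e f) (y : C.Pos) :
    S.alphaPos (S.reflPos e f y) = S.alphaPos y := by
  -- The two cross terms `∂ μ(·, ·)` of the expansion cancel only because `∂ (ε • h) = ∂ h`.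
  have hsplit : S.reflPos e f y = y + (-S.lam e y) • f + C.tau (-e) (S.mu y f) := by
    rw [reflPos_apply, map_neg, AddMonoidHom.neg_apply, neg_smul]
    abel
  rw [hsplit, S.alphaPos_add, S.alphaPos_add, S.alphaPos_zsmul_of_mu_self hr.mu_self,
    hr.alphaPos_eq_zero, S.alphaPos_tau, map_neg, hr.alphaNeg_eq_zero]
  simp only [map_add, map_zsmul, map_neg, map_zero, mu_tau_right, AddMonoidHom.add_apply,
    AddMonoidHom.neg_apply, AddMonoidHom.smul_apply, AddMonoidHom.zero_apply, P.bd_eps,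
    hr.lam_eq_two]
  module

theorem isWallHom_reflection (hr : S.IsReflectionPair e f) :
    IsWallHom S S (S.reflection e f) :=
  ⟨hr.lam_reflNeg_reflPos, hr.mu_reflPos_reflPos, hr.alphaNeg_reflNeg, hr.alphaPos_reflPos⟩

end IsReflectionPair

variable {S} {a₁ a₂ : C.Neg} {b₁ b₂ : C.Pos}

theorem IsOrthogonalPair.reflNeg_sub_apply (ho : S.IsOrthogonalPair a₁ b₁ a₂ b₂)
    (h₂ : S.IsHyperbolic a₂ b₂) : S.reflNeg (a₁ - a₂) (b₁ - b₂) a₂ = a₁ := by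
  rw [reflNeg_apply, map_sub, ho.lam₂₁, h₂.lam_eq_one]
  module

theorem IsOrthogonalPair.reflPos_sub_apply (ho : S.IsOrthogonalPair a₁ b₁ a₂ b₂)
    (h₂ : S.IsHyperbolic a₂ b₂) : S.reflPos (a₁ - a₂) (b₁ - b₂) b₂ = b₁ := by
  simp only [reflPos_apply, map_sub, AddMonoidHom.sub_apply, ho.lam₁₂,
    h₂.lam_eq_one, ho.mu₂₁, h₂.mu_self, sub_zero, map_zero]
  module

theorem IsHyperbolic.map {D : HPair H} {T : WallAux P D} {φ : HPairHom C D}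
    (hφ : IsWallHom S T φ) {a : C.Neg} {b : C.Pos} (h : S.IsHyperbolic a b) :
    T.IsHyperbolic (φ.neg a) (φ.pos b) := by
  obtain ⟨hlam, hmu, hαneg, hαpos⟩ := hφ
  exact ⟨(hlam a b).trans h.lam_eq_one, (hmu b b).trans h.mu_self,
    (hαneg a).trans h.alphaNeg_eq_zero, (hαpos b).trans h.alphaPos_eq_zero⟩

end WallAux

section

variable {H : Type} [AddCommGroup H] {P : FormParameter H}

theorem OrthogonalIn.isOrthogonalPair {C : HPair H} {S : WallAux P C} {N N' : SubPair C}
    (ho : OrthogonalIn S N N') {a₁ a₂ : C.Neg} {b₁ b₂ : C.Pos} (ha₁ : a₁ ∈ N.neg)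
    (hb₁ : b₁ ∈ N.pos) (ha₂ : a₂ ∈ N'.neg) (hb₂ : b₂ ∈ N'.pos) :
    S.IsOrthogonalPair a₁ b₁ a₂ b₂ :=
  ⟨ho.2.2.1 ha₁ b₂ hb₂, (ho.2.2.2.1 hb₁).1 a₂ ha₂, (ho.2.2.2.1 hb₁).2 b₂ hb₂⟩

def WallHom.id (M : WallForm P) : WallHom M M where
  hom := ⟨AddMonoidHom.id _, AddMonoidHom.id _, fun _ _ => rfl⟩
  isWall := ⟨fun _ _ => rfl, fun _ _ => rfl, fun _ => rfl, fun _ => rfl⟩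

def WallHom.comp {L M N : WallForm P} (g : WallHom M N) (f : WallHom L M) : WallHom L N where
  hom := ⟨g.hom.neg.comp f.hom.neg, g.hom.pos.comp f.hom.pos, fun x h => by
    simp only [AddMonoidHom.comp_apply, f.hom.comm, g.hom.comm]⟩
  isWall := by
    obtain ⟨fl, fm, fn, fp⟩ := f.isWall
    obtain ⟨gl, gm, gn, gp⟩ := g.isWall
    exact ⟨fun x y => (gl _ _).trans (fl x y), fun y y' => (gm _ _).trans (fm y y'),
      fun x => (gn _).trans (fn x), fun y => (gp _).trans (fp y)⟩

def WallIso.refl (M : WallForm P) : WallIso M M where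
  toHom := WallHom.id M
  invHom := WallHom.id M
  left_neg _ := rfl
  right_neg _ := rfl
  left_pos _ := rfl
  right_pos _ := rfl

def WallIso.trans {L M N : WallForm P} (Φ : WallIso L M) (Ψ : WallIso M N) : WallIso L N where
  toHom := Ψ.toHom.comp Φ.toHom
  invHom := Φ.invHom.comp Ψ.invHom
  left_neg x := (congrArg Φ.invHom.hom.neg (Ψ.left_neg _)).trans (Φ.left_neg x)
  right_neg x := (congrArg Ψ.toHom.hom.neg (Φ.right_neg _)).trans (Ψ.right_neg x)
  left_pos y := (congrArg Φ.invHom.hom.pos (Ψ.left_pos _)).trans (Φ.left_pos y)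
  right_pos y := (congrArg Ψ.toHom.hom.pos (Φ.right_pos _)).trans (Ψ.right_pos y)

def WallForm.reflection (M : WallForm P) {e : M.carrier.Neg} {f : M.carrier.Pos}
    (hr : M.str.IsReflectionPair e f) : WallIso M M where
  toHom := ⟨M.str.reflection e f, hr.isWallHom_reflection⟩
  invHom := ⟨M.str.reflection e f, hr.isWallHom_reflection⟩
  left_neg := hr.reflNeg_involutive
  right_neg := hr.reflNeg_involutive
  left_pos := hr.reflPos_involutive
  right_pos := hr.reflPos_involutive

section StandardForm

variable [AddGroup.FG H]

theorem stdWall_isHyperbolic {g : ℕ} (i : Fin g) :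
    (stdWall P g).str.IsHyperbolic (stdA i) (stdB i) where
  lam_eq_one := by
    show ∑ j, (Pi.single i 1 : Fin g → ℤ) j * (Pi.single i 1 : Fin g → ℤ) j = 1
    simp [Pi.single_apply]
  mu_self := by
    show (∑ j, (Pi.single i 1 : Fin g → ℤ) j • (0 : Fin g → H) j)
      + P.eps • ∑ j, (Pi.single i 1 : Fin g → ℤ) j • (0 : Fin g → H) j = 0
    simp
  alphaNeg_eq_zero := rfl
  alphaPos_eq_zero := by simp [stdWall, stdB]

theorem stdWall_one_hom_ext {D : HPair H} {φ ψ : HPairHom (stdWall P 1).carrier D}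
    (ha : φ.neg (stdA 0) = ψ.neg (stdA 0)) (hb : φ.pos (stdB 0) = ψ.pos (stdB 0)) :
    φ.neg = ψ.neg ∧ φ.pos = ψ.pos := by
  have neg_eq (x : (stdWall P 1).carrier.Neg) : x = x 0 • stdA 0 := by
    change x = x 0 • (Pi.single 0 1 : Fin 1 → ℤ)
    funext j
    fin_cases j
    simp
  have pos_eq (y : (stdWall P 1).carrier.Pos) :
      y = y.1 0 • stdB 0 + (stdWall P 1).carrier.tau (stdA 0) (y.2 0) := by
    refine Prod.ext (funext fun j => ?_) (funext fun j => ?_) <;> fin_cases j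
    · show y.1 0 = y.1 0 • (Pi.single 0 1 : Fin 1 → ℤ) 0 + 0
      simp
    · show y.2 0 = y.1 0 • (0 : H) + (Pi.single 0 1 : Fin 1 → ℤ) 0 • y.2 0
      simp
  refine ⟨AddMonoidHom.ext fun x => ?_, AddMonoidHom.ext fun y => ?_⟩
  · rw [neg_eq x, map_zsmul, map_zsmul, ha]
  · rw [pos_eq y, map_add, map_add, map_zsmul, map_zsmul, hb, φ.comm, ψ.comm, ha]

theorem exists_wallIso_of_orthogonalIn {M : WallForm P} {f g : WallHom (stdWall P 1) M}
    (ho : OrthogonalIn M.str f.hom.rangeSub g.hom.rangeSub) :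
    ∃ Φ : WallIso M M,
      (∀ x, f.hom.neg x = Φ.toHom.hom.neg (g.hom.neg x)) ∧
      (∀ y, f.hom.pos y = Φ.toHom.hom.pos (g.hom.pos y)) := by
  have hf := (stdWall_isHyperbolic 0).map f.isWall
  have hg := (stdWall_isHyperbolic 0).map g.isWall
  have hfg : M.str.IsOrthogonalPair (f.hom.neg (stdA 0)) (f.hom.pos (stdB 0))
      (g.hom.neg (stdA 0)) (g.hom.pos (stdB 0)) :=
    ho.isOrthogonalPair ⟨_, rfl⟩ ⟨_, rfl⟩ ⟨_, rfl⟩ ⟨_, rfl⟩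
  let Φ := M.reflection (hf.isReflectionPair_sub hg hfg)
  obtain ⟨hneg, hpos⟩ := stdWall_one_hom_ext (φ := f.hom) (ψ := (Φ.toHom.comp g).hom)
    (hfg.reflNeg_sub_apply hg).symm (hfg.reflPos_sub_apply hg).symm
  exact ⟨Φ, DFunLike.congr_fun hneg, DFunLike.congr_fun hpos⟩

end StandardForm

end

/-- **Transitivity.** If the complex `L(M)` is connected (any
two morphisms `W → M` are joined by a finite chain of morphisms in which
consecutive ones have orthogonal images), then for any two morphisms
`f₁, f₂ : W → M` there is an automorphism `Φ` of `M` with `f₁ = Φ ∘ f₂`. -/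
theorem statement_6 {H : Type} [AddCommGroup H] [AddGroup.FG H]
    (P : FormParameter H) (M : WallForm P)
    (hconn : ∀ f f' : WallHom (stdWall P 1) M,
      Relation.ReflTransGen
        (fun a b : WallHom (stdWall P 1) M =>
          OrthogonalIn M.str a.hom.rangeSub b.hom.rangeSub) f f')
    (f₁ f₂ : WallHom (stdWall P 1) M) :
    ∃ Φ : WallIso M M,
      (∀ x, f₁.hom.neg x = Φ.toHom.hom.neg (f₂.hom.neg x)) ∧
      (∀ y, f₁.hom.pos y = Φ.toHom.hom.pos (f₂.hom.pos y)) := by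
  induction hconn f₁ f₂ with
  | refl => exact ⟨WallIso.refl M, fun _ => rfl, fun _ => rfl⟩
  | tail _ horth ih =>
    obtain ⟨Φ, hΦneg, hΦpos⟩ := ih
    obtain ⟨Ψ, hΨneg, hΨpos⟩ := exists_wallIso_of_orthogonalIn horth
    refine ⟨Ψ.trans Φ, fun x => ?_, fun y => ?_⟩
    · rw [hΦneg, hΨneg]
      rfl
    · rw [hΦpos, hΨpos]
      rfl
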